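/- Let p, q ≥ 2 and let X = lim←(𝕋, z ↦ z^{pq}) with projections π_n : X → 𝕋. Then the pushforward map (π₀)_* is an affine bijection from the set of ℤ²-invariant regular Borel probability measures on X (for the action generated by coordinatewise p-th and q-th powers) onto the set of regular Borel probability measures μ on 𝕋 satisfying (φ_p)_*μ = (φ_q)_*μ = μ, where φ_p(z) = z^p and φ_q(z) = z^q. -/

import Mathlib

open MeasureTheory

/-- The inverse limit `X = lim← (𝕋, z ↦ z^{pq})` (written additively,
`𝕋 = ℝ/ℤ`). -/
def Xlim (p q : ℕ) : Type :=
  {x : ℕ → AddCircle (1 : ℝ) // ∀ n, (p * q) • x (n + 1) = x n}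

noncomputable instance (p q : ℕ) : TopologicalSpace (Xlim p q) :=
  instTopologicalSpaceSubtype

noncomputable instance (p q : ℕ) : MeasurableSpace (Xlim p q) :=
  Subtype.instMeasurableSpace

/-- The coordinatewise `p`-th power automorphism of `X`. -/
noncomputable def TpX (p q : ℕ) (x : Xlim p q) : Xlim p q :=
  ⟨fun n => p • x.1 n, fun n => by rw [smul_comm, x.2 n]⟩

/-- The coordinatewise `q`-th power automorphism of `X`. -/
noncomputable def TqX (p q : ℕ) (x : Xlim p q) : Xlim p q :=
  ⟨fun n => q • x.1 n, fun n => by rw [smul_comm, x.2 n]⟩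

/-!
A `ℤ²`-invariant measure `μ` on `X` is invariant under `T_p ∘ T_q`, which shifts the coordinates
by one, so all the projections `(π_n)_* μ` equal `(π₀)_* μ`; as the cylinders `π_n⁻¹ B` generate
the σ-algebra, `μ` is determined by `(π₀)_* μ`. Conversely, for a `×p, ×q`-invariant `ν` the
assignment `π_n⁻¹ B ↦ ν B` is a well-defined additive content on the ring of cylinders (because
`z ↦ z^{pq}` is onto and preserves `ν`). It is σ-subadditive: approximate from inside by a
compact set and from outside by open sets, then compactness of `X` reduces a countable cylinder
cover to a finite one, living at a single level. Carathéodory's theorem extends it to a measure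
whose projections are all `ν`, hence invariant under `T_p` and `T_q`. Regularity is automatic on
the compact metrizable spaces `𝕋` and `X`.
-/

open Set Function
open scoped ENNReal

abbrev InverseLimit {Y : Type*} (f : Y → Y) : Type _ :=
  {x : ℕ → Y // ∀ n, f (x (n + 1)) = x n}

namespace InverseLimit

variable {Y : Type*} (f : Y → Y)

def proj (n : ℕ) (x : InverseLimit f) : Y := x.1 n

lemma proj_eq_iterate (x : InverseLimit f) {j N : ℕ} (h : j ≤ N) :
    proj f j x = f^[N - j] (proj f N x) := by
  obtain ⟨k, rfl⟩ := Nat.exists_eq_add_of_le h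
  rw [Nat.add_sub_cancel_left]
  induction k with
  | zero => rfl
  | succ k ih => rw [ih (by omega), iterate_succ_apply, ← add_assoc, proj, proj, x.2]

lemma preimage_proj_of_le {j N : ℕ} (h : j ≤ N) (B : Set Y) :
    proj f j ⁻¹' B = proj f N ⁻¹' (f^[N - j] ⁻¹' B) := by
  ext x
  simp only [mem_preimage, proj_eq_iterate f x h]

lemma proj_surjective (hf : Surjective f) (N : ℕ) : Surjective (proj f N) := by
  intro z
  set g := surjInv hf
  have hg : RightInverse g f := rightInverse_surjInv hf
  refine ⟨⟨fun k => f^[N] (g^[k] z), fun k => ?_⟩, hg.iterate N z⟩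
  rw [← iterate_succ_apply' f, iterate_succ_apply, iterate_succ_apply', hg]

section Topology

variable [TopologicalSpace Y]

lemma continuous_proj (n : ℕ) : Continuous (proj f n) :=
  (continuous_apply n).comp continuous_subtype_val

lemma compactSpace [CompactSpace Y] [T2Space Y] (hf : Continuous f) :
    CompactSpace (InverseLimit f) := by
  have : IsClosed {x : ℕ → Y | ∀ n, f (x (n + 1)) = x n} := by
    simp only [ofPred_forall]
    exact isClosed_iInter fun n =>
      isClosed_eq (hf.comp (continuous_apply (n + 1))) (continuous_apply n)
  exact isCompact_iff_compactSpace.mp this.isCompact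

end Topology

section Measure

variable [MeasurableSpace Y]

lemma measurable_proj (n : ℕ) : Measurable (proj f n) :=
  (measurable_pi_apply n).comp measurable_subtype_coe

def cylinders : Set (Set (InverseLimit f)) :=
  {S | ∃ n B, MeasurableSet B ∧ S = proj f n ⁻¹' B}

variable {f}

lemma exists_common_level (hf : Measurable f) {s t : Set (InverseLimit f)}
    (hs : s ∈ cylinders f) (ht : t ∈ cylinders f) :
    ∃ N B D, MeasurableSet B ∧ MeasurableSet D ∧ s = proj f N ⁻¹' B ∧ t = proj f N ⁻¹' D := by
  obtain ⟨n, B, hB, rfl⟩ := hs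
  obtain ⟨m, D, hD, rfl⟩ := ht
  exact ⟨max n m, _, _, hf.iterate _ hB, hf.iterate _ hD,
    preimage_proj_of_le f (le_max_left n m) B, preimage_proj_of_le f (le_max_right n m) D⟩

lemma isSetRing_cylinders (hf : Measurable f) : IsSetRing (cylinders f) where
  empty_mem := ⟨0, ∅, MeasurableSet.empty, rfl⟩
  union_mem s t hs ht := by
    obtain ⟨N, B, D, hB, hD, rfl, rfl⟩ := exists_common_level hf hs ht
    exact ⟨N, B ∪ D, hB.union hD, rfl⟩
  sdiff_mem s t hs ht := by
    obtain ⟨N, B, D, hB, hD, rfl, rfl⟩ := exists_common_level hf hs ht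
    exact ⟨N, B \ D, hB.diff hD, rfl⟩

variable (f) in
lemma measurableSpace_eq_generateFrom_cylinders :
    (inferInstance : MeasurableSpace (InverseLimit f)) =
      MeasurableSpace.generateFrom (cylinders f) := by
  refine le_antisymm ?_ (MeasurableSpace.generateFrom_le ?_)
  · let _ := MeasurableSpace.generateFrom (cylinders f)
    have : Measurable (Subtype.val : InverseLimit f → ℕ → Y) :=
      measurable_pi_lambda _ fun n _ hB =>
        MeasurableSpace.measurableSet_generateFrom ⟨n, _, hB, rfl⟩
    exact this.comap_le
  · rintro _ ⟨n, B, hB, rfl⟩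
    exact measurable_proj f n hB

lemma ext_of_map_proj (hf : Measurable f) {μ₁ μ₂ : Measure (InverseLimit f)}
    [IsFiniteMeasure μ₁] (h : ∀ n, μ₁.map (proj f n) = μ₂.map (proj f n)) : μ₁ = μ₂ := by
  have hcyl : ∀ n B, MeasurableSet B → μ₁ (proj f n ⁻¹' B) = μ₂ (proj f n ⁻¹' B) :=
    fun n B hB => by
      rw [← Measure.map_apply (measurable_proj f n) hB, h,
        Measure.map_apply (measurable_proj f n) hB]
  refine ext_of_generate_finite _ (measurableSpace_eq_generateFrom_cylinders f)
    (isSetRing_cylinders hf).isSetSemiring.isPiSystem ?_ (hcyl 0 univ MeasurableSet.univ)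
  rintro _ ⟨n, B, hB, rfl⟩
  exact hcyl n B hB

lemma map_proj_eq_map_proj_zero {μ : Measure (InverseLimit f)}
    {T : InverseLimit f → InverseLimit f}
    (hT : MeasurePreserving T μ μ) (hTproj : ∀ n, proj f (n + 1) ∘ T = proj f n) (n : ℕ) :
    μ.map (proj f n) = μ.map (proj f 0) := by
  induction n with
  | zero => rfl
  | succ n ih =>
    rw [← ih, ← hTproj n, ← Measure.map_map (measurable_proj f _) hT.measurable, hT.map_eq]

lemma map_eq_self_of_semiconj (hf : Measurable f) {μ : Measure (InverseLimit f)}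
    [IsFiniteMeasure μ] {ν : Measure Y} (hμ : ∀ n, μ.map (proj f n) = ν)
    {T : InverseLimit f → InverseLimit f} (hT : Measurable T) {g : Y → Y}
    (hg : MeasurePreserving g ν ν) (hTg : ∀ n, Semiconj (proj f n) T g) : μ.map T = μ :=
  ext_of_map_proj hf fun n => by
    have hgn := (hTg n).comp_eq ▸ hg.comp ⟨measurable_proj f n, hμ n⟩
    rw [(hgn.map_of_comp (measurable_proj f n) hT).map_eq, hμ n]

variable {ν : Measure Y}

lemma measure_eq_of_preimage_proj_eq (hf : MeasurePreserving f ν ν) (hfs : Surjective f)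
    {n m : ℕ} {B D : Set Y} (hB : MeasurableSet B) (hD : MeasurableSet D)
    (h : proj f n ⁻¹' B = proj f m ⁻¹' D) : ν B = ν D := by
  rw [preimage_proj_of_le f (le_max_left n m), preimage_proj_of_le f (le_max_right n m)] at h
  have h' := (proj_surjective f hfs _).preimage_injective h
  rw [← (hf.iterate (max n m - n)).measure_preimage hB.nullMeasurableSet, h',
    (hf.iterate (max n m - m)).measure_preimage hD.nullMeasurableSet]

variable (f ν) in
/-- The infimum runs over all representations `S = π_n⁻¹ B`, which give the same value by
`measure_eq_of_preimage_proj_eq`; it is `⊤` off the cylinders. -/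
noncomputable def cylinderMeasure (S : Set (InverseLimit f)) : ℝ≥0∞ :=
  ⨅ (n : ℕ) (B : Set Y) (_ : MeasurableSet B) (_ : S = proj f n ⁻¹' B), ν B

lemma cylinderMeasure_preimage_proj (hf : MeasurePreserving f ν ν) (hfs : Surjective f)
    {n : ℕ} {B : Set Y} (hB : MeasurableSet B) : cylinderMeasure f ν (proj f n ⁻¹' B) = ν B :=
  le_antisymm (iInf₂_le_of_le n B (iInf₂_le_of_le hB rfl le_rfl))
    (le_iInf₂ fun _ _ => le_iInf₂ fun hD h =>
      (measure_eq_of_preimage_proj_eq hf hfs hB hD h).le)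

noncomputable def cylinderContent (hf : MeasurePreserving f ν ν) (hfs : Surjective f) :
    AddContent ℝ≥0∞ (cylinders f) :=
  (isSetRing_cylinders hf.measurable).addContent_of_union (cylinderMeasure f ν)
    (by simpa using cylinderMeasure_preimage_proj (n := 0) hf hfs MeasurableSet.empty)
    fun hs ht hst => by
      obtain ⟨N, B, D, hB, hD, rfl, rfl⟩ := exists_common_level hf.measurable hs ht
      rw [disjoint_preimage_iff (proj_surjective f hfs N)] at hst
      rw [← preimage_union, cylinderMeasure_preimage_proj hf hfs (hB.union hD),
        cylinderMeasure_preimage_proj hf hfs hB, cylinderMeasure_preimage_proj hf hfs hD,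
        measure_union hst hD]

lemma cylinderContent_preimage_proj (hf : MeasurePreserving f ν ν) (hfs : Surjective f)
    {n : ℕ} {B : Set Y} (hB : MeasurableSet B) :
    cylinderContent hf hfs (proj f n ⁻¹' B) = ν B :=
  cylinderMeasure_preimage_proj hf hfs hB

variable [TopologicalSpace Y] [CompactSpace Y] [T2Space Y] [OpensMeasurableSpace Y]

lemma exists_measure_le_sum_of_preimage_subset (hf : MeasurePreserving f ν ν)
    (hfc : Continuous f) (hfs : Surjective f) {n : ℕ} {K : Set Y} (hK : IsCompact K)
    {k : ℕ → ℕ} {U : ℕ → Set Y} (hU : ∀ i, IsOpen (U i))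
    (hcov : proj f n ⁻¹' K ⊆ ⋃ i, proj f (k i) ⁻¹' U i) :
    ∃ s : Finset ℕ, ν K ≤ ∑ i ∈ s, ν (U i) := by
  have := compactSpace f hfc
  obtain ⟨s, hs⟩ :=
    (hK.isClosed.preimage (continuous_proj f n)).isCompact.elim_finite_subcover
      _ (fun i => (hU i).preimage (continuous_proj f (k i))) hcov
  set N := max n (s.sup k)
  have hkN : ∀ i ∈ s, k i ≤ N := fun i hi => (Finset.le_sup hi).trans (le_max_right _ _)
  have hsub : f^[N - n] ⁻¹' K ⊆ ⋃ i ∈ s, f^[N - k i] ⁻¹' U i := by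
    rw [← (proj_surjective f hfs N).preimage_subset_preimage_iff,
      ← preimage_proj_of_le f (le_max_left _ _), preimage_iUnion₂]
    refine hs.trans (iUnion₂_mono fun i hi => (preimage_proj_of_le f (hkN i hi) _).le)
  refine ⟨s, ?_⟩
  calc ν K = ν (f^[N - n] ⁻¹' K) :=
        ((hf.iterate _).measure_preimage hK.measurableSet.nullMeasurableSet).symm
    _ ≤ ∑ i ∈ s, ν (f^[N - k i] ⁻¹' U i) :=
        (measure_mono hsub).trans (measure_biUnion_finset_le _ _)
    _ = ∑ i ∈ s, ν (U i) := Finset.sum_congr rfl fun i _ =>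
        (hf.iterate _).measure_preimage (hU i).measurableSet.nullMeasurableSet

variable [IsFiniteMeasure ν] [ν.Regular]

lemma measure_le_tsum_of_preimage_subset (hf : MeasurePreserving f ν ν) (hfc : Continuous f)
    (hfs : Surjective f) {n : ℕ} {B : Set Y} (hB : MeasurableSet B) {k : ℕ → ℕ}
    {D : ℕ → Set Y} (hcov : proj f n ⁻¹' B ⊆ ⋃ i, proj f (k i) ⁻¹' D i) :
    ν B ≤ ∑' i, ν (D i) := by
  refine ENNReal.le_of_forall_pos_le_add fun ε hε _ => ?_
  have hε2 : (ε : ℝ≥0∞) / 2 ≠ 0 := by simpa using hε.ne'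
  obtain ⟨δ, hδ, hδsum⟩ := ENNReal.exists_pos_sum_of_countable hε2 ℕ
  obtain ⟨K, hKB, hK, hBK⟩ := hB.exists_isCompact_lt_add (measure_ne_top ν B) hε2
  choose U hDU hU hUD using fun i =>
    (D i).exists_isOpen_lt_add (measure_ne_top ν (D i)) (ENNReal.coe_ne_zero.mpr (hδ i).ne')
  obtain ⟨s, hs⟩ := exists_measure_le_sum_of_preimage_subset hf hfc hfs hK hU
    ((preimage_mono hKB).trans (hcov.trans (iUnion_mono fun i => preimage_mono (hDU i))))
  calc ν B ≤ ν K + ε / 2 := hBK.le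
    _ ≤ ∑' i, (ν (D i) + δ i) + ε / 2 := by
        gcongr
        exact hs.trans ((Finset.sum_le_sum fun i _ => (hUD i).le).trans (ENNReal.sum_le_tsum s))
    _ = ∑' i, ν (D i) + (∑' i, (δ i : ℝ≥0∞) + ε / 2) := by rw [ENNReal.tsum_add, add_assoc]
    _ ≤ ∑' i, ν (D i) + ε := by
        conv_rhs => rw [← ENNReal.add_halves (ε : ℝ≥0∞)]
        gcongr

lemma isSigmaSubadditive_cylinderContent (hf : MeasurePreserving f ν ν) (hfc : Continuous f)
    (hfs : Surjective f) : (cylinderContent hf hfs).IsSigmaSubadditive := by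
  intro t ht hU
  obtain ⟨n, B, hB, hUB⟩ := hU
  choose k D hD htD using ht
  have hcov : proj f n ⁻¹' B ⊆ ⋃ i, proj f (k i) ⁻¹' D i := by
    rw [← hUB]
    exact iUnion_mono fun i => (htD i).le
  rw [hUB, cylinderContent_preimage_proj hf hfs hB]
  refine (measure_le_tsum_of_preimage_subset hf hfc hfs hB hcov).trans_eq
    (tsum_congr fun i => ?_)
  rw [htD i, cylinderContent_preimage_proj hf hfs (hD i)]

theorem exists_map_proj_eq (hf : MeasurePreserving f ν ν) (hfc : Continuous f)
    (hfs : Surjective f) : ∃ μ : Measure (InverseLimit f), ∀ n, μ.map (proj f n) = ν := by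
  have hgen := measurableSpace_eq_generateFrom_cylinders f
  refine ⟨(cylinderContent hf hfs).measure (isSetRing_cylinders hf.measurable).isSetSemiring
    hgen.le (isSigmaSubadditive_cylinderContent hf hfc hfs), fun n => ?_⟩
  ext B hB
  rw [Measure.map_apply (measurable_proj f n) hB,
    AddContent.measure_eq _ _ hgen _ ⟨n, B, hB, rfl⟩, cylinderContent_preimage_proj hf hfs hB]

end Measure

end InverseLimit

lemma AddCircle.nsmul_surjective {T : ℝ} {n : ℕ} (hn : n ≠ 0) :
    Surjective fun z : AddCircle T => n • z := by
  intro z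
  obtain ⟨x, rfl⟩ := QuotientAddGroup.mk_surjective z
  refine ⟨((x / n : ℝ) : AddCircle T), ?_⟩
  change n • _ = _
  rw [← AddCircle.coe_nsmul, nsmul_eq_mul, mul_div_cancel₀ _ (Nat.cast_ne_zero.mpr hn)]

namespace Xlim

open InverseLimit

variable (p q : ℕ)

local notation "𝕋" => AddCircle (1 : ℝ)

/-- `Xlim p q` is, by definition, the inverse limit of `z ↦ (p * q) • z`. -/
local notation "mulPQ" => fun z : 𝕋 => (p * q) • z

instance : CompactSpace (Xlim p q) :=
  InverseLimit.compactSpace mulPQ (continuous_const_smul _)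

instance : TopologicalSpace.PseudoMetrizableSpace (Xlim p q) :=
  inferInstanceAs
    (TopologicalSpace.PseudoMetrizableSpace {x : ℕ → 𝕋 | ∀ n, (p * q) • x (n + 1) = x n})

instance : BorelSpace (Xlim p q) :=
  inferInstanceAs (BorelSpace (InverseLimit mulPQ))

lemma measurable_TpX : Measurable (TpX p q) :=
  (measurable_pi_lambda _ fun n =>
    (measurable_const_smul p).comp (measurable_proj mulPQ n)).subtype_mk

lemma measurable_TqX : Measurable (TqX p q) :=
  (measurable_pi_lambda _ fun n =>
    (measurable_const_smul q).comp (measurable_proj mulPQ n)).subtype_mk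

lemma measurePreserving_mulPQ {ν : Measure 𝕋} (hp : ν.map (fun z => p • z) = ν)
    (hq : ν.map (fun z => q • z) = ν) : MeasurePreserving mulPQ ν ν := by
  have h := (⟨measurable_const_smul p, hp⟩ : MeasurePreserving (fun z : 𝕋 => p • z) ν ν).comp
    (⟨measurable_const_smul q, hq⟩ : MeasurePreserving (fun z : 𝕋 => q • z) ν ν)
  simpa only [comp_def, smul_smul] using h

lemma map_proj_eq_map_proj_zero {μ : Measure (Xlim p q)} (hp : μ.map (TpX p q) = μ)
    (hq : μ.map (TqX p q) = μ) (n : ℕ) : μ.map (proj mulPQ n) = μ.map (proj mulPQ 0) :=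
  InverseLimit.map_proj_eq_map_proj_zero
    ((⟨measurable_TpX p q, hp⟩ : MeasurePreserving _ μ μ).comp ⟨measurable_TqX p q, hq⟩)
    (fun n => funext fun x => (smul_smul p q _).trans (x.2 n)) n

lemma eq_of_map_proj_zero_eq {μ₁ μ₂ : Measure (Xlim p q)} [hμ₁ : IsFiniteMeasure μ₁]
    (hp₁ : μ₁.map (TpX p q) = μ₁) (hq₁ : μ₁.map (TqX p q) = μ₁)
    (hp₂ : μ₂.map (TpX p q) = μ₂) (hq₂ : μ₂.map (TqX p q) = μ₂)
    (h : μ₁.map (proj mulPQ 0) = μ₂.map (proj mulPQ 0)) : μ₁ = μ₂ :=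
  @ext_of_map_proj _ _ _ (measurable_const_smul _) μ₁ μ₂ hμ₁ fun n => by
    rw [map_proj_eq_map_proj_zero p q hp₁ hq₁, map_proj_eq_map_proj_zero p q hp₂ hq₂, h]

lemma map_eq_self_of_coord_smul {μ : Measure (Xlim p q)} [hμ : IsFiniteMeasure μ]
    {ν : Measure 𝕋} (hμν : ∀ n, μ.map (proj mulPQ n) = ν) {r : ℕ}
    (hν : ν.map (fun z => r • z) = ν) {T : Xlim p q → Xlim p q} (hT : Measurable T)
    (hTr : ∀ x n, (T x).1 n = r • x.1 n) : μ.map T = μ :=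
  @map_eq_self_of_semiconj _ _ _ (measurable_const_smul _) μ hμ ν hμν T hT _
    ⟨measurable_const_smul r, hν⟩ fun n x => hTr x n

end Xlim

open InverseLimit in
/-- Pushforward along `π₀` is an affine bijection from the `ℤ²`-invariant
regular Borel probability measures on `X = lim← (𝕋, z ↦ z^{pq})` onto the
`×p, ×q`-invariant regular Borel probability measures on `𝕋`. -/
theorem stmt_13 (p q : ℕ) (hp : 2 ≤ p) (hq : 2 ≤ q) :
    Set.BijOn (fun μ : Measure (Xlim p q) => μ.map (fun x => x.1 0))
      {μ : Measure (Xlim p q) | IsProbabilityMeasure μ ∧ μ.Regular ∧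
        μ.map (TpX p q) = μ ∧ μ.map (TqX p q) = μ}
      {ν : Measure (AddCircle (1 : ℝ)) | IsProbabilityMeasure ν ∧ ν.Regular ∧
        ν.map (fun z => p • z) = ν ∧ ν.map (fun z => q • z) = ν} ∧
    ∀ (a b : ENNReal) (μ₁ μ₂ : Measure (Xlim p q)),
      (a • μ₁ + b • μ₂).map (fun x => x.1 0) =
        a • μ₁.map (fun x => x.1 0) + b • μ₂.map (fun x => x.1 0) := by
  have hfc : Continuous fun z : AddCircle (1 : ℝ) => (p * q) • z := continuous_const_smul _
  have hπ₀ : Measurable fun x : Xlim p q => x.1 0 := measurable_proj _ 0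
  refine ⟨⟨?_, ?_, ?_⟩, fun a b μ₁ μ₂ => ?_⟩
  · rintro μ ⟨hμ, -, hμp, hμq⟩
    have hπμ : MeasurePreserving (fun x : Xlim p q => x.1 0) μ (μ.map fun x => x.1 0) :=
      ⟨hπ₀, rfl⟩
    exact ⟨Measure.isProbabilityMeasure_map hπ₀.aemeasurable, inferInstance,
      (hπμ.of_semiconj ⟨Xlim.measurable_TpX p q, hμp⟩ (fun _ => rfl)
        (measurable_const_smul p)).map_eq,
      (hπμ.of_semiconj ⟨Xlim.measurable_TqX p q, hμq⟩ (fun _ => rfl)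
        (measurable_const_smul q)).map_eq⟩
  · rintro μ₁ ⟨hμ₁, -, hp₁, hq₁⟩ μ₂ ⟨-, -, hp₂, hq₂⟩ h
    exact Xlim.eq_of_map_proj_zero_eq p q hp₁ hq₁ hp₂ hq₂ h
  · rintro ν ⟨hν, -, hνp, hνq⟩
    obtain ⟨μ, hμ⟩ : ∃ μ : Measure (Xlim p q), ∀ n, μ.map (proj _ n) = ν :=
      exists_map_proj_eq (Xlim.measurePreserving_mulPQ p q hνp hνq) hfc
        (AddCircle.nsmul_surjective (Nat.mul_ne_zero (by omega) (by omega)))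
    have : IsProbabilityMeasure μ :=
      (Measure.isProbabilityMeasure_map_iff hπ₀.aemeasurable).mp (hμ 0 ▸ hν)
    exact ⟨μ, ⟨this, inferInstance,
      Xlim.map_eq_self_of_coord_smul p q hμ hνp (Xlim.measurable_TpX p q) fun _ _ => rfl,
      Xlim.map_eq_self_of_coord_smul p q hμ hνq (Xlim.measurable_TqX p q) fun _ _ => rfl⟩, hμ 0⟩
  · rw [Measure.map_add _ _ hπ₀, Measure.map_smul, Measure.map_smul]
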